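/- Fix α > 0. The kernel K_α is infinitely differentiable on (0,∞)×(0,∞) and satisfies ∂_t K_α(x,t) = x^{2(α-1)/α} ∂_{xx} K_α(x,t) for all x, t > 0. -/

import Mathlib

/-!
Writing `g = ∂ₓ log K = x⁻¹ - (α / 2t) x^(2/α - 1)`, one has `∂ₓₓ K = K (g² + g')` and
`∂ₜ K = K (α² x^(2/α) / 4t² - (α/2 + 1) / t)`. Multiplying `g² + g'` by `x^(2 - 2/α)` and
writing every power of `x` through `q = x^(2/α)` turns the equation into the rational identity
`(1 - c q)² - 1 - c (2/α - 1) q = c² q² - c (2/α + 1) q` with `c = α / 2t`.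
-/

open MeasureTheory Filter Set

/-- The kernel `K_α(x,t) = (α^α/(2^α Γ(α/2))) x t^{-(α/2+1)} exp(-α² x^{2/α}/(4t))`. -/
noncomputable def Kker (α x t : ℝ) : ℝ :=
  (α ^ α / (2 ^ α * Real.Gamma (α / 2))) * x * t ^ (-(α / 2 + 1)) *
    Real.exp (-(α ^ 2) * x ^ (2 / α) / (4 * t))


open Topology

section

variable {α x t : ℝ}

theorem contDiffAt_Kker {n : WithTop ℕ∞} {p : ℝ × ℝ} (hx : p.1 ≠ 0) (ht : p.2 ≠ 0) :
    ContDiffAt ℝ n (fun p : ℝ × ℝ => Kker α p.1 p.2) p := by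
  unfold Kker
  fun_prop (disch := simp [*])

theorem hasDerivAt_Kker_snd (x : ℝ) (ht : t ≠ 0) :
    HasDerivAt (fun s => Kker α x s)
      (Kker α x t * (α ^ 2 * x ^ (2 / α) / (4 * t ^ 2) - (α / 2 + 1) / t)) t := by
  have hpow := (Real.hasDerivAt_rpow_const (p := -(α / 2 + 1)) (Or.inl ht)).const_mul
    (α ^ α / (2 ^ α * Real.Gamma (α / 2)) * x)
  have hexp := ((hasDerivAt_const t (-(α ^ 2) * x ^ (2 / α))).div
    ((hasDerivAt_id t).const_mul 4) (by simpa using ht)).exp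
  refine (hpow.mul hexp).congr_deriv ?_
  rw [Real.rpow_sub_one ht]
  simp only [Kker, Pi.div_apply, id]
  field_simp
  ring

theorem hasDerivAt_Kker_fst (t : ℝ) (hx : x ≠ 0) :
    HasDerivAt (fun y => Kker α y t)
      (Kker α x t * (x⁻¹ - α / (2 * t) * x ^ (2 / α - 1))) x := by
  have hlin := (hasDerivAt_id x).const_mul (α ^ α / (2 ^ α * Real.Gamma (α / 2)))
  have hexp := (((Real.hasDerivAt_rpow_const (p := 2 / α) (Or.inl hx)).const_mul
    (-(α ^ 2))).div_const (4 * t)).exp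
  refine ((hlin.mul_const (t ^ (-(α / 2 + 1)))).mul hexp).congr_deriv ?_
  rw [Real.rpow_sub_one hx]
  simp only [Kker, id]
  field_simp
  ring

theorem hasDerivAt_deriv_Kker_fst (t : ℝ) (hx : x ≠ 0) :
    HasDerivAt (deriv fun y => Kker α y t)
      (Kker α x t * ((x⁻¹ - α / (2 * t) * x ^ (2 / α - 1)) ^ 2
        + (-(x ^ 2)⁻¹ - α / (2 * t) * ((2 / α - 1) * x ^ (2 / α - 1 - 1))))) x := by
  have hderiv : (deriv fun y => Kker α y t) =ᶠ[𝓝 x]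
      fun y => Kker α y t * (y⁻¹ - α / (2 * t) * y ^ (2 / α - 1)) := by
    filter_upwards [eventually_ne_nhds hx] with y hy
    exact (hasDerivAt_Kker_fst t hy).deriv
  have hlog := (hasDerivAt_inv hx).sub
    ((Real.hasDerivAt_rpow_const (p := 2 / α - 1) (Or.inl hx)).const_mul (α / (2 * t)))
  refine (((hasDerivAt_Kker_fst t hx).mul hlog).congr_of_eventuallyEq hderiv).congr_deriv ?_
  simp only [Pi.sub_apply]
  ring

end

theorem stmt3 (α : ℝ) (hα : 0 < α) :
    ContDiffOn ℝ (⊤ : ℕ∞) (fun p : ℝ × ℝ => Kker α p.1 p.2) (Set.Ioi 0 ×ˢ Set.Ioi 0) ∧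
    (∀ x t : ℝ, 0 < x → 0 < t →
      deriv (fun s => Kker α x s) t =
        x ^ (2 * (α - 1) / α) * iteratedDeriv 2 (fun y => Kker α y t) x) := by
  refine ⟨fun p hp => (contDiffAt_Kker hp.1.ne' hp.2.ne').contDiffWithinAt, fun x t hx ht => ?_⟩
  have hcoeff : x ^ (2 * (α - 1) / α) * ((x⁻¹ - α / (2 * t) * x ^ (2 / α - 1)) ^ 2
      + (-(x ^ 2)⁻¹ - α / (2 * t) * ((2 / α - 1) * x ^ (2 / α - 1 - 1))))
      = α ^ 2 * x ^ (2 / α) / (4 * t ^ 2) - (α / 2 + 1) / t := by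
    have hq : 0 < x ^ (2 / α) := Real.rpow_pos_of_pos hx _
    rw [show 2 * (α - 1) / α = 2 - 2 / α by field_simp, Real.rpow_sub hx, Real.rpow_two,
      Real.rpow_sub_one hx.ne', Real.rpow_sub_one hx.ne', Real.rpow_sub_one hx.ne']
    field_simp
    ring
  rw [(hasDerivAt_Kker_snd x ht.ne').deriv, iteratedDeriv_succ, iteratedDeriv_one,
    (hasDerivAt_deriv_Kker_fst t hx.ne').deriv, mul_left_comm, hcoeff]
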